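/- Fix integers k ≥ 4 and ℓ ≥ 2. Under the Threshold-Symmetric Hybrid rule (a uniform coin b ∈ {0,1} independent of ℓ i.i.d. uniform sign vectors ω₁, …, ω_ℓ ∈ (Fin k → Bool); select the least index in MID if any exists, otherwise select the index with maximum X_j if b = 0 and with minimum X_j if b = 1, breaking ties by least index), the projected type frequencies are: P(X_J = 0) = (β^ℓ/2)·(1 − (1 − 1/(2(k+1)))^ℓ + (1/(2(k+1)))^ℓ), P(X_J = 1) = (β^ℓ/2)·((1 − 1/(2(k+1)))^ℓ − (1/(2(k+1)))^ℓ), and P(X_J ≥ 2) = 1 − β^ℓ/2, where β = (k+1)/2^{k−1}. -/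

import Mathlib

/-- Number of positive literals (true coordinates) of a sign vector. -/
def numPos (k : ℕ) (ω : Fin k → Bool) : ℕ :=
  (Finset.univ.filter fun i => ω i = true).card

/-- The class MID: `2 ≤ X ≤ k-2`. -/
abbrev InMID (k x : ℕ) : Prop := 2 ≤ x ∧ x ≤ k - 2

/-- The least index attaining the maximum of `f` (ties broken by least index). -/
def leastArgmax {ℓ : ℕ} (hℓ : 0 < ℓ) (f : Fin ℓ → ℕ) : Fin ℓ :=
  have hne : (Finset.univ : Finset (Fin ℓ)).Nonempty := ⟨⟨0, hℓ⟩, Finset.mem_univ _⟩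
  have h2 : (Finset.univ.filter fun j => f j = Finset.univ.sup' hne f).Nonempty := by
    obtain ⟨b, hb, hb2⟩ := Finset.exists_mem_eq_sup' hne f
    exact ⟨b, Finset.mem_filter.mpr ⟨hb, hb2.symm⟩⟩
  (Finset.univ.filter fun j => f j = Finset.univ.sup' hne f).min' h2

/-- The least index attaining the minimum of `f` (ties broken by least index). -/
def leastArgmin {ℓ : ℕ} (hℓ : 0 < ℓ) (f : Fin ℓ → ℕ) : Fin ℓ :=
  have hne : (Finset.univ : Finset (Fin ℓ)).Nonempty := ⟨⟨0, hℓ⟩, Finset.mem_univ _⟩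
  have h2 : (Finset.univ.filter fun j => f j = Finset.univ.inf' hne f).Nonempty := by
    obtain ⟨b, hb, hb2⟩ := Finset.exists_mem_eq_inf' hne f
    exact ⟨b, Finset.mem_filter.mpr ⟨hb, hb2.symm⟩⟩
  (Finset.univ.filter fun j => f j = Finset.univ.inf' hne f).min' h2

/-- The Threshold-Symmetric Hybrid selection rule: select the least index in MID if any;
otherwise, if the coin is `b = 0` (here `b = false`) select the index with maximum number
of positives, and if `b = 1` (here `b = true`) the index with minimum number of positives,
ties broken by least index. -/
def selectHYB (k ℓ : ℕ) (hℓ : 0 < ℓ) (b : Bool) (ωs : Fin ℓ → Fin k → Bool) : Fin ℓ :=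
  let mids : Finset (Fin ℓ) := Finset.univ.filter fun j => InMID k (numPos k (ωs j))
  if h : mids.Nonempty then mids.min' h
  else if b then leastArgmin hℓ (fun j => numPos k (ωs j))
  else leastArgmax hℓ (fun j => numPos k (ωs j))


/-! If some `X_j` lies in MID, the rule selects such an index and `X_J ≥ 2`. Otherwise every
`X_j ∈ {0, 1, k-1, k}` and `X_J` is the maximum (coin `0`) or the minimum (coin `1`) of the
`X_j`. So for `v ∈ {0, 1}` the event `X_J = v` reads "every `X_j` lies in a set `A` and some
`X_j = v`", which has `N(A)^ℓ - N(A \ {v})^ℓ` outcomes, where `N(A) = ∑_{m ∈ A} (k choose m)`;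
for the sets that occur, `N` is `1`, `k + 1`, `2k + 1` or `2k + 2`. -/

open Finset

theorem numPos_le (k : ℕ) (ω : Fin k → Bool) : numPos k ω ≤ k :=
  (card_filter_le _ _).trans_eq (card_fin k)

theorem card_filter_numPos_eq (k m : ℕ) :
    #{ω : Fin k → Bool | numPos k ω = m} = k.choose m := by
  rw [← card_fin k, ← card_powersetCard, card_fin]
  refine card_nbij' (fun ω => ({i | ω i} : Finset _)) (fun s i => decide (i ∈ s)) ?_ ?_ ?_ ?_
  · intro ω hω
    rw [mem_coe, mem_filter] at hω
    rw [mem_coe, mem_powersetCard]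
    exact ⟨subset_univ _, hω.2⟩
  · intro s hs
    rw [mem_coe, mem_powersetCard] at hs
    rw [mem_coe, mem_filter]
    refine ⟨mem_univ _, ?_⟩
    simp [numPos, hs.2]
  · intro ω _; funext i; simp
  · intro s _; ext i; simp

theorem card_filter_numPos {k : ℕ} (P : ℕ → Prop) [DecidablePred P] (S : Finset ℕ)
    (hS : ∀ m ≤ k, P m ↔ m ∈ S) :
    #{ω : Fin k → Bool | P (numPos k ω)} = ∑ m ∈ S, k.choose m := by
  rw [filter_congr fun ω _ => hS _ (numPos_le k ω),
    card_eq_sum_card_fiberwise (f := numPos k) fun ω hω => by simpa using hω]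
  refine sum_congr rfl fun m hm => ?_
  rw [filter_filter, ← card_filter_numPos_eq]
  exact congrArg card (filter_congr fun ω _ => and_iff_right_of_imp fun h => h ▸ hm)

theorem card_filter_forall_and_exists {α : Type*} [Fintype α] (ℓ : ℕ) (P Q : α → Prop)
    [DecidablePred P] [DecidablePred Q] :
    #{t : Fin ℓ → α | (∀ j, P (t j)) ∧ ∃ j, Q (t j)} + #{a | P a ∧ ¬ Q a} ^ ℓ
      = #{a | P a} ^ ℓ := by
  have hpow (R : α → Prop) [DecidablePred R] :
      #{t : Fin ℓ → α | ∀ j, R (t j)} = #{a | R a} ^ ℓ := by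
    simp only [← Fintype.card_subtype]
    rw [Fintype.card_congr (Equiv.subtypePiEquivPi (p := fun _ => R)), Fintype.card_pi,
      prod_const, card_univ, Fintype.card_fin]
  rw [← hpow, ← hpow, ← card_filter_add_card_filter_not (fun t => ∃ j, Q (t j))
    (s := {t : Fin ℓ → α | ∀ j, P (t j)}), filter_filter, filter_filter]
  congr 2
  ext t
  simp [forall_and]

theorem Nat.card_subtype_bool_prod {T : Type*} [Finite T] (P : Bool × T → Prop) :
    Nat.card {p // P p} = Nat.card {t // P (false, t)} + Nat.card {t // P (true, t)} := by
  rw [Nat.card_congr (Equiv.subtypeProdEquivSigmaSubtype fun b t => P (b, t)), Nat.card_sigma,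
    Fintype.sum_bool, add_comm]

section ArgExtremum

variable {ℓ : ℕ} (hℓ : 0 < ℓ) (f : Fin ℓ → ℕ)

theorem le_apply_leastArgmax (j : Fin ℓ) : f j ≤ f (leastArgmax hℓ f) := by
  unfold leastArgmax
  generalize_proofs hne hmax
  exact (le_sup' f (mem_univ j)).trans_eq (mem_filter.mp (min'_mem _ (hmax hne))).2.symm

theorem apply_leastArgmin_le (j : Fin ℓ) : f (leastArgmin hℓ f) ≤ f j := by
  unfold leastArgmin
  generalize_proofs hne hmin
  exact (mem_filter.mp (min'_mem _ (hmin hne))).2.trans_le (inf'_le f (mem_univ j))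

theorem apply_leastArgmax_eq_iff {v : ℕ} :
    f (leastArgmax hℓ f) = v ↔ (∀ j, f j ≤ v) ∧ ∃ j, f j = v :=
  ⟨fun h => ⟨fun j => h ▸ le_apply_leastArgmax hℓ f j, _, h⟩,
    fun ⟨hle, j, hj⟩ => (hle _).antisymm (hj ▸ le_apply_leastArgmax hℓ f j)⟩

theorem apply_leastArgmin_eq_iff {v : ℕ} :
    f (leastArgmin hℓ f) = v ↔ (∀ j, v ≤ f j) ∧ ∃ j, f j = v :=
  ⟨fun h => ⟨fun j => h ▸ apply_leastArgmin_le hℓ f j, _, h⟩,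
    fun ⟨hle, j, hj⟩ => (hj ▸ apply_leastArgmin_le hℓ f j).antisymm (hle _)⟩

end ArgExtremum

section Selection

variable {k ℓ : ℕ} (hℓ : 0 < ℓ) (ωs : Fin ℓ → Fin k → Bool)

theorem inMID_numPos_selectHYB (b : Bool) (hmid : ∃ j, InMID k (numPos k (ωs j))) :
    InMID k (numPos k (ωs (selectHYB k ℓ hℓ b ωs))) := by
  obtain ⟨j, hj⟩ := hmid
  have hne : ({j | InMID k (numPos k (ωs j))} : Finset (Fin ℓ)).Nonempty :=
    ⟨j, mem_filter.mpr ⟨mem_univ j, hj⟩⟩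
  simp only [selectHYB, dif_pos hne]
  exact (mem_filter.mp (min'_mem _ hne)).2

theorem selectHYB_false_of_forall_not_inMID (hmid : ∀ j, ¬ InMID k (numPos k (ωs j))) :
    selectHYB k ℓ hℓ false ωs = leastArgmax hℓ fun j => numPos k (ωs j) := by
  simp [selectHYB, hmid]

theorem selectHYB_true_of_forall_not_inMID (hmid : ∀ j, ¬ InMID k (numPos k (ωs j))) :
    selectHYB k ℓ hℓ true ωs = leastArgmin hℓ fun j => numPos k (ωs j) := by
  simp [selectHYB, hmid]

theorem numPos_selectHYB_false_eq_iff {v : ℕ} (hv : v < 2) :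
    numPos k (ωs (selectHYB k ℓ hℓ false ωs)) = v ↔
      (∀ j, numPos k (ωs j) ≤ v) ∧ ∃ j, numPos k (ωs j) = v := by
  by_cases hmid : ∃ j, InMID k (numPos k (ωs j))
  · obtain ⟨j, hj⟩ := hmid
    have hJ := inMID_numPos_selectHYB hℓ ωs false ⟨j, hj⟩
    constructor
    · intro h; omega
    · rintro ⟨hle, -⟩; have := hle j; omega
  · rw [selectHYB_false_of_forall_not_inMID hℓ ωs (not_exists.mp hmid)]
    exact apply_leastArgmax_eq_iff hℓ fun j => numPos k (ωs j)

theorem numPos_selectHYB_true_eq_iff {v : ℕ} (hv : ¬ InMID k v) :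
    numPos k (ωs (selectHYB k ℓ hℓ true ωs)) = v ↔
      (∀ j, ¬ InMID k (numPos k (ωs j)) ∧ v ≤ numPos k (ωs j)) ∧
        ∃ j, numPos k (ωs j) = v := by
  by_cases hmid : ∃ j, InMID k (numPos k (ωs j))
  · obtain ⟨j, hj⟩ := hmid
    have hJ := inMID_numPos_selectHYB hℓ ωs true ⟨j, hj⟩
    exact iff_of_false (fun h => hv (h ▸ hJ)) fun ⟨h, _⟩ => (h j).1 hj
  · rw [not_exists] at hmid
    rw [selectHYB_true_of_forall_not_inMID hℓ ωs hmid]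
    exact (apply_leastArgmin_eq_iff hℓ fun j => numPos k (ωs j)).trans (by simp [hmid])

end Selection

section Counting

variable {k ℓ : ℕ}

theorem card_numPos_forall_and_exists (P : ℕ → Prop) [DecidablePred P] (v : ℕ)
    (S S' : Finset ℕ) (hS : ∀ m ≤ k, P m ↔ m ∈ S)
    (hS' : ∀ m ≤ k, P m ∧ m ≠ v ↔ m ∈ S') :
    #{t : Fin ℓ → Fin k → Bool | (∀ j, P (numPos k (t j))) ∧ ∃ j, numPos k (t j) = v}
      + (∑ m ∈ S', k.choose m) ^ ℓ = (∑ m ∈ S, k.choose m) ^ ℓ := by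
  rw [← card_filter_numPos P S hS, ← card_filter_numPos (fun m => P m ∧ m ≠ v) S' hS']
  exact card_filter_forall_and_exists ℓ (fun ω => P (numPos k ω)) (fun ω => numPos k ω = v)

theorem sum_choose_pred_self (hk : 1 ≤ k) : ∑ m ∈ {k - 1, k}, k.choose m = k + 1 := by
  rw [sum_pair (by omega), Nat.choose_symm hk, Nat.choose_one_right, Nat.choose_self]

theorem sum_choose_one_pred_self (hk : 3 ≤ k) :
    ∑ m ∈ {1, k - 1, k}, k.choose m = 2 * k + 1 := by
  rw [sum_insert (by simp; omega), sum_choose_pred_self (by omega), Nat.choose_one_right]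
  ring

theorem sum_choose_zero_one_pred_self (hk : 3 ≤ k) :
    ∑ m ∈ {0, 1, k - 1, k}, k.choose m = 2 * k + 2 := by
  rw [sum_insert (by simp; omega), sum_choose_one_pred_self hk, Nat.choose_zero_right]
  ring

variable (hℓ : 0 < ℓ)

theorem card_numPos_selectHYB_false_zero :
    #{t : Fin ℓ → Fin k → Bool | numPos k (t (selectHYB k ℓ hℓ false t)) = 0} = 1 := by
  rw [filter_congr fun t _ => numPos_selectHYB_false_eq_iff hℓ t zero_lt_two]
  have h := card_numPos_forall_and_exists (k := k) (ℓ := ℓ) (· ≤ 0) 0 {0} ∅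
    (by simp) (by simp)
  simpa [zero_pow hℓ.ne'] using h

theorem card_numPos_selectHYB_false_one :
    #{t : Fin ℓ → Fin k → Bool | numPos k (t (selectHYB k ℓ hℓ false t)) = 1} + 1
      = (k + 1) ^ ℓ := by
  rw [filter_congr fun t _ => numPos_selectHYB_false_eq_iff hℓ t one_lt_two]
  have h := card_numPos_forall_and_exists (k := k) (ℓ := ℓ) (· ≤ 1) 1 {0, 1} {0}
    (by simp; omega) (by simp; omega)
  simpa [add_comm] using h

theorem card_numPos_selectHYB_true_zero (hk : 3 ≤ k) :
    #{t : Fin ℓ → Fin k → Bool | numPos k (t (selectHYB k ℓ hℓ true t)) = 0}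
      + (2 * k + 1) ^ ℓ = (2 * k + 2) ^ ℓ := by
  rw [filter_congr fun t _ => numPos_selectHYB_true_eq_iff hℓ t (v := 0) (by simp)]
  have h := card_numPos_forall_and_exists (k := k) (ℓ := ℓ)
    (fun m => ¬ InMID k m ∧ 0 ≤ m) 0
    {0, 1, k - 1, k} {1, k - 1, k} (by simp; omega) (by simp; omega)
  rwa [sum_choose_zero_one_pred_self hk, sum_choose_one_pred_self hk] at h

theorem card_numPos_selectHYB_true_one (hk : 3 ≤ k) :
    #{t : Fin ℓ → Fin k → Bool | numPos k (t (selectHYB k ℓ hℓ true t)) = 1}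
      + (k + 1) ^ ℓ = (2 * k + 1) ^ ℓ := by
  rw [filter_congr fun t _ => numPos_selectHYB_true_eq_iff hℓ t (v := 1) (by simp)]
  have h := card_numPos_forall_and_exists (k := k) (ℓ := ℓ)
    (fun m => ¬ InMID k m ∧ 1 ≤ m) 1
    {1, k - 1, k} {k - 1, k} (by simp; omega) (by simp; omega)
  rwa [sum_choose_one_pred_self hk, sum_choose_pred_self (by omega)] at h

end Counting

theorem Nat.card_two_le_add_card_eq_zero_add_card_eq_one {α : Type*} [Finite α] (f : α → ℕ) :
    Nat.card {x // 2 ≤ f x} + Nat.card {x // f x = 0} + Nat.card {x // f x = 1}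
      = Nat.card α := by
  have := Fintype.ofFinite α
  simp only [Nat.card_eq_fintype_card, Fintype.card_subtype]
  rw [card_filter, card_filter, card_filter, ← sum_add_distrib, ← sum_add_distrib, Fintype.card,
    card_eq_sum_ones]
  refine sum_congr rfl fun x _ => ?_
  split_ifs <;> omega

section PairCounts

variable {k ℓ : ℕ} (hℓ : 0 < ℓ)

theorem card_numPos_selectHYB_zero (hk : 3 ≤ k) :
    Nat.card {p : Bool × (Fin ℓ → Fin k → Bool) //
        numPos k (p.2 (selectHYB k ℓ hℓ p.1 p.2)) = 0} + (2 * k + 1) ^ ℓ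
      = 1 + (2 * k + 2) ^ ℓ := by
  rw [Nat.card_subtype_bool_prod]
  simp only [Nat.card_eq_fintype_card, Fintype.card_subtype]
  have := card_numPos_selectHYB_false_zero (k := k) hℓ
  have := card_numPos_selectHYB_true_zero hℓ hk
  omega

theorem card_numPos_selectHYB_one (hk : 3 ≤ k) :
    Nat.card {p : Bool × (Fin ℓ → Fin k → Bool) //
        numPos k (p.2 (selectHYB k ℓ hℓ p.1 p.2)) = 1} + 1 = (2 * k + 1) ^ ℓ := by
  rw [Nat.card_subtype_bool_prod]
  simp only [Nat.card_eq_fintype_card, Fintype.card_subtype]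
  have := card_numPos_selectHYB_false_one (k := k) hℓ
  have := card_numPos_selectHYB_true_one hℓ hk
  omega

theorem card_two_le_numPos_selectHYB (hk : 3 ≤ k) :
    Nat.card {p : Bool × (Fin ℓ → Fin k → Bool) //
        2 ≤ numPos k (p.2 (selectHYB k ℓ hℓ p.1 p.2))} + (2 * k + 2) ^ ℓ
      = 2 * (2 ^ k) ^ ℓ := by
  have h := Nat.card_two_le_add_card_eq_zero_add_card_eq_one
    fun p : Bool × (Fin ℓ → Fin k → Bool) => numPos k (p.2 (selectHYB k ℓ hℓ p.1 p.2))
  simp only [Nat.card_eq_fintype_card (α := Bool × _), Fintype.card_prod, Fintype.card_bool,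
    Fintype.card_fun, Fintype.card_fin] at h
  have := card_numPos_selectHYB_zero hℓ hk
  have := card_numPos_selectHYB_one hℓ hk
  omega

end PairCounts

/-- For `k ≥ 4`, `ℓ ≥ 2`, under the Threshold-Symmetric Hybrid rule (a fair
coin `b` together with `ℓ` i.i.d. uniform sign vectors, selected index `J`):
`P(X_J = 0) = (β^ℓ/2)(1 - (1 - 1/(2(k+1)))^ℓ + (1/(2(k+1)))^ℓ)`,
`P(X_J = 1) = (β^ℓ/2)((1 - 1/(2(k+1)))^ℓ - (1/(2(k+1)))^ℓ)`, and
`P(X_J ≥ 2) = 1 - β^ℓ/2`, with `β = (k+1)/2^{k-1}` (probabilities computed as the number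
of favourable pairs (coin, tuple of sign vectors) divided by `2^{kℓ+1}`). -/
theorem stmt15 (k ℓ : ℕ) (hk : 4 ≤ k) (hℓ : 2 ≤ ℓ) :
    ((Nat.card {p : Bool × (Fin ℓ → Fin k → Bool) //
            numPos k (p.2 (selectHYB k ℓ (by omega) p.1 p.2)) = 0} : ℝ)
          / 2 ^ (k * ℓ + 1)
        = ((((k : ℝ) + 1) / 2 ^ (k - 1)) ^ ℓ / 2)
            * (1 - (1 - 1 / (2 * ((k : ℝ) + 1))) ^ ℓ + (1 / (2 * ((k : ℝ) + 1))) ^ ℓ)) ∧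
    ((Nat.card {p : Bool × (Fin ℓ → Fin k → Bool) //
            numPos k (p.2 (selectHYB k ℓ (by omega) p.1 p.2)) = 1} : ℝ)
          / 2 ^ (k * ℓ + 1)
        = ((((k : ℝ) + 1) / 2 ^ (k - 1)) ^ ℓ / 2)
            * ((1 - 1 / (2 * ((k : ℝ) + 1))) ^ ℓ - (1 / (2 * ((k : ℝ) + 1))) ^ ℓ)) ∧
    ((Nat.card {p : Bool × (Fin ℓ → Fin k → Bool) //
            2 ≤ numPos k (p.2 (selectHYB k ℓ (by omega) p.1 p.2))} : ℝ)
          / 2 ^ (k * ℓ + 1)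
        = 1 - (((k : ℝ) + 1) / 2 ^ (k - 1)) ^ ℓ / 2) := by
  have hℓ0 : 0 < ℓ := by omega
  have hk3 : 3 ≤ k := by omega
  have hA : 2 * ((k : ℝ) + 1) ≠ 0 := by positivity
  have hβ : ((k : ℝ) + 1) / 2 ^ (k - 1) = 2 * ((k : ℝ) + 1) / 2 ^ k := by
    rw [← mul_div_mul_left _ _ two_ne_zero, ← pow_succ', Nat.sub_add_cancel (by omega)]
  have hden : (2 : ℝ) ^ (k * ℓ + 1) = 2 * (2 ^ k) ^ ℓ := by rw [pow_succ, pow_mul, mul_comm]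
  have e0 := congrArg (Nat.cast : ℕ → ℝ) (card_numPos_selectHYB_zero hℓ0 hk3)
  have e1 := congrArg (Nat.cast : ℕ → ℝ) (card_numPos_selectHYB_one hℓ0 hk3)
  have e2 := congrArg (Nat.cast : ℕ → ℝ) (card_two_le_numPos_selectHYB hℓ0 hk3)
  push_cast at e0 e1 e2
  rw [hβ, hden, one_sub_div hA, eq_sub_of_add_eq e0, eq_sub_of_add_eq e1, eq_sub_of_add_eq e2]
  simp only [div_pow, one_pow]
  refine ⟨?_, ?_, ?_⟩ <;> field_simp <;> ring
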